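/- arXiv:2411.00328 — 6 statements merged into one kernel-verified Lean document; each statement's English description precedes it below -/
import Mathlib

section
/- Let W : Ω → [0,1] be a random variable. If for every t with 0 ≤ t < 1/2 we have P(W ∈ [t, 1/2]) ≥ P(W ∈ (1/2, 1-t]) (semi-competence), then P(W > 1/2) ≤ 2 · E[W²]. -/
open MeasureTheory ENNReal

theorem semicompetent_two_polarized {Ω : Type*} [MeasurableSpace Ω]
    (μ : Measure Ω) [IsProbabilityMeasure μ]
    (W : Ω → ℝ) (hmeas : Measurable W) (hW : ∀ ω, W ω ∈ Set.Icc (0 : ℝ) 1)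
    (hsemi : ∀ t : ℝ, 0 ≤ t → t < 1 / 2 →
      μ {ω | W ω ∈ Set.Ioc (1 / 2 : ℝ) (1 - t)} ≤ μ {ω | W ω ∈ Set.Icc t (1 / 2 : ℝ)}) :
    (μ {ω | W ω > 1 / 2}).toReal ≤ 2 * ∫ ω, (W ω) ^ 2 ∂μ := by
  set B : Set Ω := {ω | W ω > 1 / 2} with hB
  have hBmeas : MeasurableSet B := measurableSet_lt measurable_const hmeas
  set A : Set Ω := Bᶜ with hA
  -- the integrand 2*t of the layer cake formula
  have g_intble : ∀ t > (0:ℝ), IntervalIntegrable (fun t : ℝ => 2 * t) volume 0 t :=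
    fun t _ => (continuous_const.mul continuous_id).intervalIntegrable 0 t
  have g_nn : ∀ᵐ t ∂(volume.restrict (Set.Ioi (0:ℝ))), 0 ≤ 2 * t := by
    filter_upwards [ae_restrict_mem measurableSet_Ioi] with t ht
    have : (0:ℝ) < t := ht
    linarith
  have int2t : ∀ w : ℝ, (∫ t in (0:ℝ)..w, 2 * t) = w ^ 2 := by
    intro w
    rw [intervalIntegral.integral_const_mul, integral_id]
    ring
  -- layer cake for ∫⁻ W² on A
  have hLA : (∫⁻ ω in A, ENNReal.ofReal ((W ω) ^ 2) ∂μ)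
      = ∫⁻ t in Set.Ioi (0:ℝ), (μ.restrict A) {a | t ≤ W a} * ENNReal.ofReal (2 * t) := by
    have := lintegral_comp_eq_lintegral_meas_le_mul (μ.restrict A)
      (f := W) (Filter.Eventually.of_forall fun ω => show (0:ℝ) ≤ W ω from (hW ω).1)
      hmeas.aemeasurable g_intble g_nn
    simpa [int2t] using this
  -- layer cake for ∫⁻ (1-W)² on B
  have hLB : (∫⁻ ω in B, ENNReal.ofReal ((1 - W ω) ^ 2) ∂μ)
      = ∫⁻ t in Set.Ioi (0:ℝ), (μ.restrict B) {a | t < 1 - W a} * ENNReal.ofReal (2 * t) := by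
    have := lintegral_comp_eq_lintegral_meas_lt_mul (μ.restrict B)
      (f := fun ω => 1 - W ω)
      (Filter.Eventually.of_forall fun ω => by
        show (0:ℝ) ≤ 1 - W ω; linarith [(hW ω).2])
      (measurable_const.sub hmeas).aemeasurable g_intble g_nn
    simpa [int2t] using this
  -- key comparison from semi-competence
  have key : (∫⁻ ω in B, ENNReal.ofReal ((1 - W ω) ^ 2) ∂μ)
      ≤ ∫⁻ ω in A, ENNReal.ofReal ((W ω) ^ 2) ∂μ := by
    rw [hLA, hLB]
    refine lintegral_mono_ae ?_
    filter_upwards [ae_restrict_mem measurableSet_Ioi] with t ht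
    have ht0 : (0:ℝ) < t := ht
    refine mul_le_mul_left ?_ _
    rw [Measure.restrict_apply (show MeasurableSet {a | t < 1 - W a} from measurableSet_lt measurable_const
      (measurable_const.sub hmeas)),
      Measure.restrict_apply (measurableSet_le measurable_const hmeas)]
    by_cases htc : t < 1 / 2
    · calc μ ({a | t < 1 - W a} ∩ B) ≤ μ {ω | W ω ∈ Set.Ioc (1 / 2 : ℝ) (1 - t)} := by
            apply measure_mono
            rintro a ⟨ha1, ha2⟩
            exact ⟨ha2, by simp only [Set.mem_setOf_eq] at ha1; linarith⟩
        _ ≤ μ {ω | W ω ∈ Set.Icc t (1 / 2 : ℝ)} := hsemi t ht0.le htc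
        _ = μ ({a | t ≤ W a} ∩ A) := by
            congr 1
            ext a
            simp only [Set.mem_setOf_eq, Set.mem_inter_iff, Set.mem_Icc, hA, hB,
              Set.mem_compl_iff, not_lt]
    · have : {a | t < 1 - W a} ∩ B = ∅ := by
        ext a
        simp only [Set.mem_inter_iff, Set.mem_setOf_eq, Set.mem_empty_iff_false,
          iff_false, hB, not_and]
        intro h1 h2
        push_neg at htc
        linarith
      rw [this]
      simp
  -- pointwise: 1 ≤ 2 W² + 2 (1-W)²
  have hpt : ∀ ω, (1 : ℝ≥0∞) ≤ ENNReal.ofReal (2 * (W ω) ^ 2)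
      + ENNReal.ofReal (2 * (1 - W ω) ^ 2) := by
    intro ω
    rw [← ENNReal.ofReal_add (by positivity) (by positivity), ← ENNReal.ofReal_one]
    apply ENNReal.ofReal_le_ofReal
    nlinarith [sq_nonneg (2 * W ω - 1)]
  have main : μ B ≤ 2 * ∫⁻ ω, ENNReal.ofReal ((W ω) ^ 2) ∂μ := by
    have h1 : μ B = ∫⁻ _ in B, (1:ℝ≥0∞) ∂μ := by simp
    have hmW2 : Measurable fun ω => ENNReal.ofReal (2 * (W ω) ^ 2) :=
      (measurable_const.mul ((hmeas.pow_const 2))).ennreal_ofReal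
    have h2 : (∫⁻ _ in B, (1:ℝ≥0∞) ∂μ)
        ≤ ∫⁻ ω in B, (ENNReal.ofReal (2 * (W ω) ^ 2)
            + ENNReal.ofReal (2 * (1 - W ω) ^ 2)) ∂μ :=
      lintegral_mono fun ω => hpt ω
    have h3 : (∫⁻ ω in B, (ENNReal.ofReal (2 * (W ω) ^ 2)
            + ENNReal.ofReal (2 * (1 - W ω) ^ 2)) ∂μ)
        = (∫⁻ ω in B, ENNReal.ofReal (2 * (W ω) ^ 2) ∂μ)
          + ∫⁻ ω in B, ENNReal.ofReal (2 * (1 - W ω) ^ 2) ∂μ :=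
      lintegral_add_left hmW2 _
    have hofReal : ∀ x : ℝ, ENNReal.ofReal (2 * x) = 2 * ENNReal.ofReal x := by
      intro x
      rw [ENNReal.ofReal_mul (by norm_num)]
      norm_num
    calc μ B ≤ (∫⁻ ω in B, ENNReal.ofReal (2 * (W ω) ^ 2) ∂μ)
          + ∫⁻ ω in B, ENNReal.ofReal (2 * (1 - W ω) ^ 2) ∂μ := by
          rw [← h3]; rw [h1]; exact h2
      _ = 2 * ((∫⁻ ω in B, ENNReal.ofReal ((W ω) ^ 2) ∂μ)
          + ∫⁻ ω in B, ENNReal.ofReal ((1 - W ω) ^ 2) ∂μ) := by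
          simp_rw [hofReal]
          rw [lintegral_const_mul 2 ((hmeas.pow_const 2).ennreal_ofReal),
            lintegral_const_mul 2 (show Measurable fun ω => ENNReal.ofReal ((1 - W ω) ^ 2) from
              ((measurable_const.sub hmeas).pow_const 2).ennreal_ofReal),
            mul_add]
      _ ≤ 2 * ((∫⁻ ω in B, ENNReal.ofReal ((W ω) ^ 2) ∂μ)
          + ∫⁻ ω in A, ENNReal.ofReal ((W ω) ^ 2) ∂μ) := by
          gcongr
      _ = 2 * ∫⁻ ω, ENNReal.ofReal ((W ω) ^ 2) ∂μ := by
          rw [hA, lintegral_add_compl _ hBmeas]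
  -- finiteness and conversion to real numbers
  have hfin : (∫⁻ ω, ENNReal.ofReal ((W ω) ^ 2) ∂μ) ≤ 1 := by
    calc (∫⁻ ω, ENNReal.ofReal ((W ω) ^ 2) ∂μ) ≤ ∫⁻ _, (1:ℝ≥0∞) ∂μ := by
          refine lintegral_mono fun ω => ?_
          rw [← ENNReal.ofReal_one]
          exact ENNReal.ofReal_le_ofReal (by nlinarith [(hW ω).1, (hW ω).2])
      _ = 1 := by simp
  have hfin' : (∫⁻ ω, ENNReal.ofReal ((W ω) ^ 2) ∂μ) ≠ ⊤ :=
    fun h => by simp [h] at hfin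
  have hint : (∫ ω, (W ω) ^ 2 ∂μ)
      = (∫⁻ ω, ENNReal.ofReal ((W ω) ^ 2) ∂μ).toReal := by
    rw [integral_eq_lintegral_of_nonneg_ae
      (Filter.Eventually.of_forall fun ω => sq_nonneg _)
      (hmeas.pow_const 2).aestronglyMeasurable]
  rw [hint]
  have h2fin : (2 * ∫⁻ ω, ENNReal.ofReal ((W ω) ^ 2) ∂μ) ≠ ⊤ :=
    ENNReal.mul_ne_top (by norm_num) hfin'
  have := ENNReal.toReal_mono h2fin main
  rwa [ENNReal.toReal_mul, ENNReal.toReal_ofNat] at this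
end

section
/- Let W : Ω → [0,1] be a random variable satisfying the semi-competence condition: for every 0 ≤ t < 1/2, P(W ∈ [t,1/2]) ≥ P(W ∈ (1/2,1-t]). Then for any monotone increasing function g : [0,1] → ℝ with g(0) = 0, E[g(W)·1{W ≤ 1/2}] ≥ E[g(1-W)·1{1-W < 1/2}]. -/
open MeasureTheory

theorem stochastic_dominance_lemma {Ω : Type*} [MeasurableSpace Ω]
    (μ : Measure Ω) [IsProbabilityMeasure μ]
    (W : Ω → ℝ) (hmeas : Measurable W) (hW : ∀ ω, W ω ∈ Set.Icc (0 : ℝ) 1)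
    (hsemi : ∀ t : ℝ, 0 ≤ t → t < 1 / 2 →
      μ {ω | W ω ∈ Set.Ioc (1 / 2 : ℝ) (1 - t)} ≤ μ {ω | W ω ∈ Set.Icc t (1 / 2 : ℝ)})
    (g : ℝ → ℝ) (hg : MonotoneOn g (Set.Icc 0 1)) (hg0 : g 0 = 0)
    (hint1 : Integrable (fun ω => if W ω ≤ 1 / 2 then g (W ω) else 0) μ)
    (hint2 : Integrable (fun ω => if 1 - W ω < 1 / 2 then g (1 - W ω) else 0) μ) :
    ∫ ω, (if 1 - W ω < 1 / 2 then g (1 - W ω) else 0) ∂μ ≤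
      ∫ ω, (if W ω ≤ 1 / 2 then g (W ω) else 0) ∂μ := by
  -- clamped version of g, monotone on all of ℝ
  set g' : ℝ → ℝ := fun x => g (max 0 (min x 1)) with hg'def
  have clamp_mem : ∀ x : ℝ, max 0 (min x 1) ∈ Set.Icc (0:ℝ) 1 := fun x =>
    ⟨le_max_left _ _, max_le (by norm_num) (min_le_right _ _)⟩
  have hg'mono : Monotone g' := fun x y hxy =>
    hg (clamp_mem x) (clamp_mem y) (max_le_max le_rfl (min_le_min hxy le_rfl))
  have hg'eq : ∀ x : ℝ, x ∈ Set.Icc (0:ℝ) 1 → g' x = g x := by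
    intro x hx
    simp only [hg'def]
    rw [min_eq_left hx.2, max_eq_right hx.1]
  have hg'nonneg : ∀ x, 0 ≤ g' x := by
    intro x
    have h0 : g' 0 = 0 := by rw [hg'eq 0 ⟨le_rfl, by norm_num⟩, hg0]
    calc (0:ℝ) = g' 0 := h0.symm
    _ ≤ g' x := by
      rcases le_total 0 x with h | h
      · exact hg'mono h
      · simp only [hg'def]
        apply hg (clamp_mem 0) (clamp_mem x)
        simp [min_eq_left, h.trans zero_le_one]
  have hW1 : ∀ ω, (1 - W ω) ∈ Set.Icc (0:ℝ) 1 := by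
    intro ω; obtain ⟨h1, h2⟩ := hW ω; constructor <;> linarith
  -- monotonicity fact: if g x > s and x ≤ y ≤ 1, then g' y > s
  have key_mono : ∀ s x y : ℝ, x ∈ Set.Icc (0:ℝ) 1 → y ∈ Set.Icc (0:ℝ) 1 →
      x ≤ y → s < g x → s < g' y := by
    intro s x y hx hy hxy hsx
    calc s < g x := hsx
    _ = g' x := (hg'eq x hx).symm
    _ ≤ g' y := hg'mono hxy
  set f₁ : Ω → ℝ := fun ω => if W ω ≤ 1 / 2 then g' (W ω) else 0 with hf₁def
  set f₂ : Ω → ℝ := fun ω => if 1 - W ω < 1 / 2 then g' (1 - W ω) else 0 with hf₂def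
  have hf1 : (fun ω => if W ω ≤ 1 / 2 then g (W ω) else 0) = f₁ := by
    funext ω; simp only [hf₁def]
    by_cases h : W ω ≤ 1/2 <;> simp [h, hg'eq _ (hW ω)]
  have hf2 : (fun ω => if 1 - W ω < 1 / 2 then g (1 - W ω) else 0) = f₂ := by
    funext ω; simp only [hf₂def]
    by_cases h : 1 - W ω < 1/2 <;> simp [h, hg'eq _ (hW1 ω)]
  have hint1' : Integrable f₁ μ := hf1 ▸ hint1
  rw [hf1, hf2]
  have hmeas1 : Measurable f₁ :=
    Measurable.ite (measurableSet_le hmeas measurable_const)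
      (hg'mono.measurable.comp hmeas) measurable_const
  have hmeas2 : Measurable f₂ :=
    Measurable.ite (measurableSet_lt (measurable_const.sub hmeas) measurable_const)
      (hg'mono.measurable.comp (measurable_const.sub hmeas)) measurable_const
  have hnn1 : ∀ ω, 0 ≤ f₁ ω := by
    intro ω; simp only [hf₁def]; split <;> [exact hg'nonneg _; exact le_rfl]
  have hnn2 : ∀ ω, 0 ≤ f₂ ω := by
    intro ω; simp only [hf₂def]; split <;> [exact hg'nonneg _; exact le_rfl]
  -- key measure inequality
  have key : ∀ s : ℝ, 0 < s → μ {ω | s < f₂ ω} ≤ μ {ω | s < f₁ ω} := by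
    intro s hs
    have hset2 : {ω | s < f₂ ω} = {ω | 1 - W ω < 1/2 ∧ s < g (1 - W ω)} := by
      ext ω
      simp only [Set.mem_setOf_eq, hf₂def]
      by_cases h : 1 - W ω < 1/2
      · rw [if_pos h, hg'eq _ (hW1 ω)]
        exact ⟨fun hh => ⟨h, hh⟩, fun hh => hh.2⟩
      · rw [if_neg h]
        exact ⟨fun hh => absurd hs (not_lt.mpr hh.le), fun hh => absurd hh.1 h⟩
    rw [hset2]
    set S : Set ℝ := {x | x ∈ Set.Ico (0:ℝ) (1/2) ∧ s < g x} with hSdef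
    rcases Set.eq_empty_or_nonempty S with hS | hS
    · have : {ω | 1 - W ω < 1/2 ∧ s < g (1 - W ω)} = ∅ := by
        ext ω
        simp only [Set.mem_setOf_eq, Set.mem_empty_iff_false, iff_false]
        rintro ⟨h1, h2⟩
        exact Set.eq_empty_iff_forall_notMem.mp hS (1 - W ω) ⟨⟨(hW1 ω).1, h1⟩, h2⟩
      rw [this, measure_empty]
      exact zero_le
    · have hbdd : BddBelow S := ⟨0, fun x hx => hx.1.1⟩
      set t : ℝ := sInf S with htdef
      have ht0 : 0 ≤ t := le_csInf hS fun x hx => hx.1.1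
      have hthalf : t < 1/2 := by
        obtain ⟨x, hx⟩ := hS
        exact lt_of_le_of_lt (csInf_le hbdd hx) hx.1.2
      -- above the inf (strictly), g exceeds s
      have habove : ∀ x : ℝ, t < x → x ≤ 1/2 → s < g' x := by
        intro x htx hx2
        obtain ⟨a, haS, hax⟩ := exists_lt_of_csInf_lt hS htx
        exact key_mono s a x ⟨haS.1.1, by linarith [haS.1.2]⟩
          ⟨ht0.trans htx.le, by linarith⟩ hax.le haS.2
      -- the sequence
      set u : ℕ → ℝ := fun n => if s < g t then t else t + (1/2 - t)/(n+2) with hudef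
      have hu_mem : ∀ n, 0 ≤ u n ∧ u n < 1/2 ∧ s < g' (u n) := by
        intro n
        simp only [hudef]
        split
        · refine ⟨ht0, hthalf, ?_⟩
          rename_i h
          exact key_mono s t t ⟨ht0, by linarith⟩ ⟨ht0, by linarith⟩ le_rfl h
        · have hpos : (0:ℝ) < (1/2 - t)/(n+2) := by
            apply div_pos (by linarith) (by positivity)
          have hlt : t + (1/2 - t)/(n+2) < 1/2 := by
            have h2 : (1/2 - t)/(n+2) < (1/2 - t)/1 := by
              apply div_lt_div_of_pos_left (by linarith) one_pos
              have : (0:ℝ) ≤ n := n.cast_nonneg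
              linarith
            simp at h2
            linarith
          exact ⟨by linarith, hlt, habove _ (by linarith) hlt.le⟩
      have hu_anti : Antitone u := by
        intro m n hmn
        simp only [hudef]
        split
        · exact le_rfl
        · have : ((m:ℝ)+2) ≤ (n:ℝ)+2 := by exact_mod_cast by omega
          gcongr
      have hu_le : ∀ x ∈ S, ∃ n, u n ≤ x := by
        intro x hx
        by_cases hgt : s < g t
        · exact ⟨0, by simp only [hudef, if_pos hgt]; exact csInf_le hbdd hx⟩
        · have htx : t < x := by
            rcases lt_or_eq_of_le (csInf_le hbdd hx) with h | h
            · exact h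
            · exact absurd (by rw [htdef, h]; exact hx.2) hgt
          have : Filter.Tendsto (fun n : ℕ => t + (1/2 - t)/(n+2)) Filter.atTop (nhds t) := by
            have : Filter.Tendsto (fun n : ℕ => (1/2 - t)/(n+2)) Filter.atTop (nhds 0) := by
              apply Filter.Tendsto.div_atTop tendsto_const_nhds
              apply Filter.tendsto_atTop_add_const_right
              exact tendsto_natCast_atTop_atTop
            simpa using tendsto_const_nhds.add this
          have := this.eventually_lt_const htx
          obtain ⟨n, hn⟩ := this.exists
          exact ⟨n, by simp only [hudef, if_neg hgt]; exact hn.le⟩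
      -- union bound
      have hsub : {ω | 1 - W ω < 1/2 ∧ s < g (1 - W ω)}
          ⊆ ⋃ n, {ω | W ω ∈ Set.Ioc (1/2 : ℝ) (1 - u n)} := by
        rintro ω ⟨h1, h2⟩
        have hmem : (1 - W ω) ∈ S := ⟨⟨(hW1 ω).1, h1⟩, h2⟩
        obtain ⟨n, hn⟩ := hu_le _ hmem
        exact Set.mem_iUnion.mpr ⟨n, ⟨by linarith, by linarith⟩⟩
      have hdir : Monotone fun n => {ω | W ω ∈ Set.Ioc (1/2 : ℝ) (1 - u n)} := by
        intro m n hmn ω hω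
        exact ⟨hω.1, hω.2.trans (by linarith [hu_anti hmn])⟩
      calc μ {ω | 1 - W ω < 1/2 ∧ s < g (1 - W ω)}
          ≤ μ (⋃ n, {ω | W ω ∈ Set.Ioc (1/2 : ℝ) (1 - u n)}) := measure_mono hsub
        _ = ⨆ n, μ {ω | W ω ∈ Set.Ioc (1/2 : ℝ) (1 - u n)} :=
            hdir.directed_le.measure_iUnion
        _ ≤ μ {ω | s < f₁ ω} := by
            apply iSup_le
            intro n
            obtain ⟨hn0, hn2, hng⟩ := hu_mem n
            refine (hsemi (u n) hn0 hn2).trans (measure_mono ?_)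
            rintro ω ⟨hw1, hw2⟩
            simp only [Set.mem_setOf_eq, hf₁def, if_pos hw2]
            exact lt_of_lt_of_le hng (hg'mono hw1)
  -- pass from measures to integrals via layer cake
  have hae1 : 0 ≤ᵐ[μ] f₁ := Filter.Eventually.of_forall hnn1
  have hae2 : 0 ≤ᵐ[μ] f₂ := Filter.Eventually.of_forall hnn2
  rw [integral_eq_lintegral_of_nonneg_ae hae2 hmeas2.aestronglyMeasurable,
      integral_eq_lintegral_of_nonneg_ae hae1 hmeas1.aestronglyMeasurable]
  apply ENNReal.toReal_mono hint1'.lintegral_lt_top.ne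
  rw [lintegral_eq_lintegral_meas_lt μ hae2 hmeas2.aemeasurable,
      lintegral_eq_lintegral_meas_lt μ hae1 hmeas1.aemeasurable]
  apply lintegral_mono_ae
  filter_upwards [ae_restrict_mem measurableSet_Ioi] with s hs
  exact key s hs
end

section
/- Let ρ be a distribution of K-class classifiers and D a data distribution, with point-wise error W_ρ(x,y) = P_{h~ρ}(h(x)≠y). Suppose ρ is η-polarized, i.e., η·E_D[W_ρ²] ≥ P_D(W_ρ > 1/2), and tie-free, so that L(h_ρ^MV) ≤ P_D(W_ρ > 1/2). Then L(h_ρ^MV) ≤ (2η(K-1)/K)·(E_ρ[L(h)] − (1/2)·E_{ρ²}[D(h,h')]), where L(h) = P_D(h(X)≠Y) and D(h,h') = P_D(h(X)≠h'(X)). -/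
open MeasureTheory

lemma fubini_toReal {A Ω : Type*} [MeasurableSpace A] [MeasurableSpace Ω]
    (ν : Measure A) [IsProbabilityMeasure ν] (μ : Measure Ω) [IsProbabilityMeasure μ]
    {S : Set (A × Ω)} (hS : MeasurableSet S) :
    ∫ ω, (ν ((fun a => (a, ω)) ⁻¹' S)).toReal ∂μ
      = ∫ a, (μ (Prod.mk a ⁻¹' S)).toReal ∂ν := by
  rw [integral_toReal (measurable_measure_prodMk_right hS).aemeasurable
      (Filter.Eventually.of_forall fun ω => measure_lt_top ν _),
    integral_toReal (measurable_measure_prodMk_left hS).aemeasurable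
      (Filter.Eventually.of_forall fun a => measure_lt_top μ _),
    ← Measure.prod_apply hS, ← Measure.prod_apply_symm hS]

lemma toReal_prob_le_one {α : Type*} [MeasurableSpace α] (ν : Measure α)
    [IsProbabilityMeasure ν] (s : Set α) : (ν s).toReal ≤ 1 :=
  calc (ν s).toReal ≤ (ν Set.univ).toReal :=
        ENNReal.toReal_mono (measure_ne_top ν _) (measure_mono (Set.subset_univ s))
    _ = 1 := by simp

lemma pointwise_bound {H : Type*} [MeasurableSpace H] (K : ℕ) (hK : 2 ≤ K)
    (ρ : Measure H) [IsProbabilityMeasure ρ] (f : H → Fin K) (y0 : Fin K)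
    (hE : ∀ y : Fin K, MeasurableSet {c | f c = y})
    (hD : MeasurableSet {p : H × H | f p.1 ≠ f p.2}) :
    (ρ {c | f c ≠ y0}).toReal ^ 2 ≤
      2 * ((K : ℝ) - 1) / K * ((ρ {c | f c ≠ y0}).toReal
        - (1 / 2) * ((ρ.prod ρ) {p : H × H | f p.1 ≠ f p.2}).toReal) := by
  set p : Fin K → ℝ := fun y => (ρ {c | f c = y}).toReal with hp
  -- sum of p = 1
  have hsum : ∑ y : Fin K, p y = 1 := by
    have h1 : ρ (⋃ y ∈ (Finset.univ : Finset (Fin K)), {c | f c = y}) =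
        ∑ y : Fin K, ρ {c | f c = y} := by
      apply measure_biUnion_finset
      · intro a _ b _ hab
        exact Set.disjoint_left.2 fun c hc hc' => hab (hc ▸ hc')
      · intro y _; exact hE y
    have h2 : (⋃ y ∈ (Finset.univ : Finset (Fin K)), {c | f c = y}) = Set.univ := by
      ext c; simp
    rw [h2, measure_univ] at h1
    have := congrArg ENNReal.toReal h1
    rw [ENNReal.toReal_sum (fun y _ => (measure_lt_top ρ _).ne)] at this
    simpa [hp] using this.symm
  have hW : (ρ {c | f c ≠ y0}).toReal = 1 - p y0 := by
    have hc : {c | f c ≠ y0} = {c | f c = y0}ᶜ := rfl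
    rw [hc, measure_compl (hE y0) (measure_lt_top ρ _).ne, measure_univ,
      ENNReal.toReal_sub_of_le (prob_le_one) (by simp)]
    simp [hp]
  -- agreement set
  have hagree : (ρ.prod ρ) {q : H × H | f q.1 = f q.2} = ∑ y : Fin K, ρ {c | f c = y} * ρ {c | f c = y} := by
    have h2 : (⋃ y ∈ (Finset.univ : Finset (Fin K)), ({c | f c = y} ×ˢ {c | f c = y})) =
        {q : H × H | f q.1 = f q.2} := by
      ext q; simp only [Set.mem_iUnion, Set.mem_prod, Set.mem_setOf_eq, Finset.mem_univ,
        Set.iUnion_true, Set.mem_iUnion]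
      constructor
      · rintro ⟨y, h1, h2⟩; rw [h1, h2]
      · intro hq; exact ⟨f q.2, hq, rfl⟩
    rw [← h2]
    rw [measure_biUnion_finset]
    · simp_rw [Measure.prod_prod]
    · intro a _ b _ hab
      refine Set.disjoint_left.2 fun q hq hq' => hab ?_
      rw [← hq.1, hq'.1]
    · intro y _; exact (hE y).prod (hE y)
  have hd : ((ρ.prod ρ) {q : H × H | f q.1 ≠ f q.2}).toReal = 1 - ∑ y : Fin K, p y ^ 2 := by
    have hc : {q : H × H | f q.1 ≠ f q.2} = {q : H × H | f q.1 = f q.2}ᶜ := rfl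
    have hAm : MeasurableSet {q : H × H | f q.1 = f q.2} := by
      have : {q : H × H | f q.1 = f q.2} = {p : H × H | f p.1 ≠ f p.2}ᶜ := by
        ext q; simp [Set.mem_setOf_eq]
      rw [this]; exact hD.compl
    rw [hc, measure_compl hAm (measure_lt_top _ _).ne, measure_univ,
      ENNReal.toReal_sub_of_le (prob_le_one) (by simp), hagree,
      ENNReal.toReal_sum (fun y _ => (ENNReal.mul_lt_top (measure_lt_top _ _) (measure_lt_top _ _)).ne)]
    simp_rw [ENNReal.toReal_mul]
    simp [hp, sq]
  -- Cauchy-Schwarz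
  have hcs : (∑ y ∈ Finset.univ.erase y0, p y) ^ 2 ≤
      ((K : ℝ) - 1) * ∑ y ∈ Finset.univ.erase y0, p y ^ 2 := by
    have := sq_sum_le_card_mul_sum_sq (s := Finset.univ.erase y0) (f := p)
    have hcard : (Finset.univ.erase y0).card = K - 1 := by
      rw [Finset.card_erase_of_mem (Finset.mem_univ _), Finset.card_univ, Fintype.card_fin]
    rw [hcard] at this
    have hc1 : ((K - 1 : ℕ) : ℝ) = (K : ℝ) - 1 := by
      rw [Nat.cast_sub (by omega), Nat.cast_one]
    rw [hc1] at this
    exact this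
  have herase : ∑ y ∈ Finset.univ.erase y0, p y = 1 - p y0 := by
    have := Finset.add_sum_erase Finset.univ p (Finset.mem_univ y0)
    rw [hsum] at this; linarith
  have herase2 : ∑ y ∈ Finset.univ.erase y0, p y ^ 2 = (∑ y : Fin K, p y ^ 2) - p y0 ^ 2 := by
    have h := Finset.add_sum_erase Finset.univ (fun y => p y ^ 2) (Finset.mem_univ y0)
    linarith
  rw [hW, hd]
  set s := ∑ y : Fin K, p y ^ 2 with hs
  have hKR : (2 : ℝ) ≤ (K : ℝ) := by exact_mod_cast hK
  have hKpos : (0 : ℝ) < K := by linarith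
  rw [herase, herase2] at hcs
  rw [div_mul_eq_mul_div, le_div_iff₀ hKpos]
  nlinarith [hcs]

theorem polarized_second_order_bound {Ω H X : Type*} [MeasurableSpace Ω] [MeasurableSpace H]
    (K : ℕ) (hK : 1 ≤ K)
    (μ : Measure Ω) [IsProbabilityMeasure μ] (ρ : Measure H) [IsProbabilityMeasure ρ]
    (h : H → X → Fin K) (ptX : Ω → X) (ptY : Ω → Fin K) (hMV : X → Fin K)
    (η : ℝ) (hη : 0 ≤ η)
    (W : Ω → ℝ) (hWdef : ∀ ω, W ω = (ρ {c | h c (ptX ω) ≠ ptY ω}).toReal)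
    (hjm : MeasurableSet {q : H × Ω | h q.1 (ptX q.2) ≠ ptY q.2})
    (hjm' : MeasurableSet {q : (H × H) × Ω | h q.1.1 (ptX q.2) ≠ h q.1.2 (ptX q.2)})
    -- η-polarized
    (hpol : (μ {ω | W ω > 1 / 2}).toReal ≤ η * ∫ ω, (W ω) ^ 2 ∂μ)
    -- tie-free, so the majority-vote error is bounded by P(W > 1/2)
    (htiefree : (μ {ω | hMV (ptX ω) ≠ ptY ω}).toReal ≤ (μ {ω | W ω > 1 / 2}).toReal) :
    (μ {ω | hMV (ptX ω) ≠ ptY ω}).toReal ≤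
      2 * η * ((K : ℝ) - 1) / K *
        ((∫ c, (μ {ω | h c (ptX ω) ≠ ptY ω}).toReal ∂ρ) -
          (1 / 2) * ∫ p, (μ {ω | h p.1 (ptX ω) ≠ h p.2 (ptX ω)}).toReal ∂(ρ.prod ρ)) := by
  rcases eq_or_lt_of_le hK with hK1 | hK2
  · -- K = 1 : the majority vote is always correct (Fin 1 is a subsingleton)
    have hempty : {ω | hMV (ptX ω) ≠ ptY ω} = ∅ := by
      ext ω
      simp only [Set.mem_setOf_eq, Set.mem_empty_iff_false, iff_false, not_not]
      omega
    have hzero : ((K : ℝ) - 1) = 0 := by rw [← hK1]; norm_num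
    rw [hempty, hzero]
    simp
  · have hK2' : 2 ≤ K := hK2
    -- measurability of W and of the disagreement function g
    have hWeq : W = fun ω => (ρ ((fun c => (c, ω)) ⁻¹' {q : H × Ω | h q.1 (ptX q.2) ≠ ptY q.2})).toReal :=
      funext fun ω => hWdef ω
    have hWmeas : Measurable W := by
      rw [hWeq]; exact (measurable_measure_prodMk_right hjm).ennreal_toReal
    set g : Ω → ℝ := fun ω => ((ρ.prod ρ) {p : H × H | h p.1 (ptX ω) ≠ h p.2 (ptX ω)}).toReal with hg
    have hgeq : g = fun ω => ((ρ.prod ρ) ((fun p => (p, ω)) ⁻¹'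
        {q : (H × H) × Ω | h q.1.1 (ptX q.2) ≠ h q.1.2 (ptX q.2)})).toReal := rfl
    have hgmeas : Measurable g := by
      rw [hgeq]; exact (measurable_measure_prodMk_right hjm').ennreal_toReal
    -- bounds
    have hWbound : ∀ ω, ‖W ω‖ ≤ 1 := by
      intro ω
      rw [hWdef ω, Real.norm_eq_abs, abs_of_nonneg ENNReal.toReal_nonneg]
      exact toReal_prob_le_one ρ _
    have hgbound : ∀ ω, ‖g ω‖ ≤ 1 := by
      intro ω
      rw [hg, Real.norm_eq_abs, abs_of_nonneg ENNReal.toReal_nonneg]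
      exact toReal_prob_le_one (ρ.prod ρ) _
    have intW : Integrable W μ :=
      (integrable_const (1 : ℝ)).mono' hWmeas.aestronglyMeasurable
        (Filter.Eventually.of_forall hWbound)
    have intW2 : Integrable (fun ω => W ω ^ 2) μ := by
      refine (integrable_const (1 : ℝ)).mono' (hWmeas.pow_const 2).aestronglyMeasurable
        (Filter.Eventually.of_forall fun ω => ?_)
      rw [Real.norm_eq_abs, abs_pow]
      calc |W ω| ^ 2 ≤ 1 ^ 2 := by
            apply pow_le_pow_left₀ (abs_nonneg _) (hWbound ω)
        _ = 1 := one_pow 2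
    have intg : Integrable g μ :=
      (integrable_const (1 : ℝ)).mono' hgmeas.aestronglyMeasurable
        (Filter.Eventually.of_forall hgbound)
    -- pointwise second-order bound
    have pw : ∀ ω, W ω ^ 2 ≤ 2 * ((K : ℝ) - 1) / K * (W ω - 1 / 2 * g ω) := by
      intro ω
      have hD : MeasurableSet {p : H × H | h p.1 (ptX ω) ≠ h p.2 (ptX ω)} :=
        (measurable_id.prodMk measurable_const) hjm'
      have hE : ∀ y : Fin K, MeasurableSet {c | h c (ptX ω) = y} := by
        intro y
        by_cases hex : ∃ c0, h c0 (ptX ω) = y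
        · obtain ⟨c0, hc0⟩ := hex
          have hset : {c | h c (ptX ω) = y} = (fun c => ((c0, c), ω)) ⁻¹'
              {q : (H × H) × Ω | h q.1.1 (ptX q.2) ≠ h q.1.2 (ptX q.2)}ᶜ := by
            ext c
            simp only [Set.mem_setOf_eq, Set.mem_preimage, Set.mem_compl_iff, not_not]
            rw [hc0]
            exact comm
          rw [hset]
          exact ((measurable_const.prodMk measurable_id).prodMk measurable_const) hjm'.compl
        · have hset : {c | h c (ptX ω) = y} = ∅ := by
            ext c
            simp only [Set.mem_setOf_eq, Set.mem_empty_iff_false, iff_false]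
            exact fun hc => hex ⟨c, hc⟩
          rw [hset]; exact MeasurableSet.empty
      have := pointwise_bound K hK2' ρ (fun c => h c (ptX ω)) (ptY ω) hE hD
      rw [hWdef ω, hg]
      exact this
    -- integrate the pointwise bound
    have hint : ∫ ω, W ω ^ 2 ∂μ ≤
        2 * ((K : ℝ) - 1) / K * ((∫ ω, W ω ∂μ) - 1 / 2 * ∫ ω, g ω ∂μ) := by
      calc ∫ ω, W ω ^ 2 ∂μ ≤ ∫ ω, 2 * ((K : ℝ) - 1) / K * (W ω - 1 / 2 * g ω) ∂μ :=
            integral_mono intW2 (((intW.sub (intg.const_mul (1 / 2))).const_mul _)) pw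
        _ = 2 * ((K : ℝ) - 1) / K * ((∫ ω, W ω ∂μ) - 1 / 2 * ∫ ω, g ω ∂μ) := by
            rw [integral_const_mul, integral_sub intW (intg.const_mul (1 / 2)),
              integral_const_mul]
    -- Fubini
    have hfub1 : ∫ ω, W ω ∂μ = ∫ c, (μ {ω | h c (ptX ω) ≠ ptY ω}).toReal ∂ρ := by
      rw [hWeq]
      exact fubini_toReal ρ μ hjm
    have hfub2 : ∫ ω, g ω ∂μ =
        ∫ p, (μ {ω | h p.1 (ptX ω) ≠ h p.2 (ptX ω)}).toReal ∂(ρ.prod ρ) := by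
      rw [hgeq]
      exact fubini_toReal (ρ.prod ρ) μ hjm'
    calc (μ {ω | hMV (ptX ω) ≠ ptY ω}).toReal ≤ (μ {ω | W ω > 1 / 2}).toReal := htiefree
      _ ≤ η * ∫ ω, (W ω) ^ 2 ∂μ := hpol
      _ ≤ η * (2 * ((K : ℝ) - 1) / K * ((∫ ω, W ω ∂μ) - 1 / 2 * ∫ ω, g ω ∂μ)) :=
            mul_le_mul_of_nonneg_left hint hη
      _ = 2 * η * ((K : ℝ) - 1) / K *
          ((∫ c, (μ {ω | h c (ptX ω) ≠ ptY ω}).toReal ∂ρ) -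
            (1 / 2) * ∫ p, (μ {ω | h p.1 (ptX ω) ≠ h p.2 (ptX ω)}).toReal ∂(ρ.prod ρ)) := by
            rw [hfub1, hfub2]; ring
end

section
/- Fix a point x with true label y, a subset A(x) ⊆ [K] with y ∈ A(x) and |A(x)| ≤ M, and label probabilities p_i ≥ 0 summing to 1 with Δ_x := Σ_{i ∉ A(x)} p_i. Then (1/2)Σ_{i≠j} p_i p_j ≥ Σ_{i≠y} p_i p_y + Δ_x·(1 − p_y − Δ_x) and consequently, using Newton's inequality, Σ_{i≠y} p_i p_y ≥ (1/2)Σ_{i≠j} p_i p_j − (Δ_x/(M−1))(1−p_y) − ((M−2)/(2(M−1)))(1−p_y)². -/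
open Finset

theorem entropy_pointwise_inequality (K M : ℕ) (hM : 2 ≤ M)
    (p : Fin K → ℝ) (y : Fin K) (A : Finset (Fin K))
    (hyA : y ∈ A) (hcard : A.card ≤ M)
    (hp : ∀ i, 0 ≤ p i) (hsum : ∑ i, p i = 1) :
    (∑ i ∈ Finset.univ.filter (· ≠ y), p i * p y) +
        (∑ i ∈ Aᶜ, p i) * (1 - p y - ∑ i ∈ Aᶜ, p i) ≤
      (1 / 2) * ∑ i : Fin K, ∑ j ∈ Finset.univ.filter (· ≠ i), p i * p j ∧
    (1 / 2) * (∑ i : Fin K, ∑ j ∈ Finset.univ.filter (· ≠ i), p i * p j) -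
        ((∑ i ∈ Aᶜ, p i) / ((M : ℝ) - 1)) * (1 - p y) -
        ((M : ℝ) - 2) / (2 * ((M : ℝ) - 1)) * (1 - p y) ^ 2 ≤
      ∑ i ∈ Finset.univ.filter (· ≠ y), p i * p y := by
  classical
  set q := p y with hqdef
  set b := ∑ i ∈ A.erase y, p i with hbdef
  set Δ := ∑ i ∈ Aᶜ, p i with hΔdef
  set Sb := ∑ i ∈ A.erase y, (p i)^2 with hSbdef
  set Sc := ∑ i ∈ Aᶜ, (p i)^2 with hScdef
  have hb0 : 0 ≤ b := Finset.sum_nonneg fun i _ => hp i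
  have hΔ0 : 0 ≤ Δ := Finset.sum_nonneg fun i _ => hp i
  have hq0 : 0 ≤ q := hp y
  have hSb0 : 0 ≤ Sb := Finset.sum_nonneg fun i _ => sq_nonneg _
  have hSc0 : 0 ≤ Sc := Finset.sum_nonneg fun i _ => sq_nonneg _
  have hsplit : ∀ f : Fin K → ℝ,
      ∑ i, f i = f y + ∑ i ∈ A.erase y, f i + ∑ i ∈ Aᶜ, f i := by
    intro f
    rw [← Finset.sum_add_sum_compl A f, ← Finset.add_sum_erase A f hyA]
  have h1 : q + b + Δ = 1 := by rw [← hsum, hsplit p]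
  have hsq : ∑ i, (p i)^2 = q^2 + Sb + Sc := by
    rw [hsplit (fun i => (p i)^2)]
  have hfy : ∑ i ∈ Finset.univ.filter (· ≠ y), p i * p y = (b + Δ) * q := by
    rw [← Finset.sum_mul]
    congr 1
    have h2 : (Finset.univ.filter (· ≠ y)) = Finset.univ.erase y :=
      Finset.filter_ne' _ _
    rw [h2, Finset.sum_erase_eq_sub (Finset.mem_univ y), hsum]
    linarith
  have hdouble : ∑ i : Fin K, ∑ j ∈ Finset.univ.filter (· ≠ i), p i * p j
      = 1 - (q^2 + Sb + Sc) := by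
    have h3 : ∀ i : Fin K, ∑ j ∈ Finset.univ.filter (· ≠ i), p i * p j
        = p i * (1 - p i) := by
      intro i
      rw [← Finset.mul_sum, Finset.filter_ne' _ _,
        Finset.sum_erase_eq_sub (Finset.mem_univ i), hsum]
    rw [Finset.sum_congr rfl fun i _ => h3 i, ← hsq]
    have : ∀ i : Fin K, p i * (1 - p i) = p i - (p i)^2 := by intro i; ring
    rw [Finset.sum_congr rfl fun i _ => this i, Finset.sum_sub_distrib, hsum]
  have hBcard : ((A.erase y).card : ℝ) ≤ (M:ℝ) - 1 := by
    have h4 : (A.erase y).card = A.card - 1 := Finset.card_erase_of_mem hyA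
    have h5 : 1 ≤ A.card := Finset.card_pos.mpr ⟨y, hyA⟩
    have : (A.erase y).card + 1 ≤ M := by omega
    have := (Nat.cast_le (α := ℝ)).mpr this
    push_cast at this
    linarith
  have hCS : b^2 ≤ ((M:ℝ) - 1) * Sb := by
    have := sq_sum_le_card_mul_sum_sq (s := A.erase y) (f := p)
    calc b^2 ≤ ((A.erase y).card : ℝ) * Sb := by exact_mod_cast this
      _ ≤ ((M:ℝ) - 1) * Sb := by
          exact mul_le_mul_of_nonneg_right hBcard hSb0
  have hb2 : Sb ≤ b^2 := Finset.sum_sq_le_sq_sum_of_nonneg fun i _ => hp i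
  have hΔ2 : Sc ≤ Δ^2 := Finset.sum_sq_le_sq_sum_of_nonneg fun i _ => hp i
  have hqe : q = 1 - b - Δ := by linarith
  have hm1 : (1:ℝ) ≤ (M:ℝ) - 1 := by
    have : (2:ℝ) ≤ (M:ℝ) := by exact_mod_cast hM
    linarith
  have hm0 : (0:ℝ) < (M:ℝ) - 1 := by linarith
  constructor
  · rw [hfy, hdouble, hqe]
    nlinarith [hb2, hΔ2]
  · rw [hfy, hdouble]
    have key : ((M:ℝ) - 1) * ((1 / 2) * (1 - (q^2 + Sb + Sc)) -
        (Δ / ((M:ℝ) - 1)) * (1 - q) -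
        ((M:ℝ) - 2) / (2 * ((M:ℝ) - 1)) * (1 - q)^2) ≤
        ((M:ℝ) - 1) * ((b + Δ) * q) := by
      have hexp : ((M:ℝ) - 1) * ((1 / 2) * (1 - (q^2 + Sb + Sc)) -
          (Δ / ((M:ℝ) - 1)) * (1 - q) -
          ((M:ℝ) - 2) / (2 * ((M:ℝ) - 1)) * (1 - q)^2)
          = ((M:ℝ) - 1) * (1 - (q^2 + Sb + Sc)) / 2 - Δ * (1 - q) -
            ((M:ℝ) - 2) * (1 - q)^2 / 2 := by
        field_simp
      rw [hexp, hqe]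
      nlinarith [hCS, mul_nonneg hm0.le hSc0, sq_nonneg Δ]
    exact le_of_mul_le_mul_left key hm0
end

section
/- Let ρ be an η-polarized, tie-free ensemble satisfying (1/2)·E_D[P_{ρ²}(h(X)≠Y, h'(X)≠Y, h(X)≠h'(X))] ≤ ε·E_D[P_ρ(h(X)≠Y)]. Then L(h_ρ^MV) ≤ η·[(1+ε)·E_ρ[L(h)] − (1/2)·E_{ρ²}[D(h,h')]]. -/
open MeasureTheory

-- Fubini for toReal of measures of sections
lemma fub_aux {α β : Type*} [MeasurableSpace α] [MeasurableSpace β]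
    (μ : Measure α) (ν : Measure β) [IsProbabilityMeasure μ] [IsProbabilityMeasure ν]
    {s : Set (α × β)} (hs : MeasurableSet s) :
    ∫ y, (μ ((fun x => (x, y)) ⁻¹' s)).toReal ∂ν
      = ∫ x, (ν (Prod.mk x ⁻¹' s)).toReal ∂μ := by
  rw [integral_toReal ((measurable_measure_prodMk_right hs).aemeasurable)
      (Filter.Eventually.of_forall fun y => measure_lt_top _ _),
    integral_toReal ((measurable_measure_prodMk_left hs).aemeasurable)
      (Filter.Eventually.of_forall fun x => measure_lt_top _ _),
    ← Measure.prod_apply hs, ← Measure.prod_apply_symm hs]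

lemma intb_aux {β : Type*} [MeasurableSpace β] (ν : Measure β) [IsProbabilityMeasure ν]
    {f : β → ℝ} (hm : Measurable f) (h0 : ∀ x, 0 ≤ f x) (h1 : ∀ x, f x ≤ 1) :
    Integrable f ν := by
  refine (integrable_const (1 : ℝ)).mono' hm.aestronglyMeasurable
    (Filter.Eventually.of_forall fun x => ?_)
  rw [Real.norm_eq_abs, abs_le]
  exact ⟨by linarith [h0 x], h1 x⟩

lemma toReal_le_one_aux {β : Type*} [MeasurableSpace β] (ν : Measure β) [IsProbabilityMeasure ν]
    (s : Set β) : (ν s).toReal ≤ 1 := by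
  have := ENNReal.toReal_mono (by simp) (prob_le_one (μ := ν) (s := s))
  simpa using this

theorem eps_restricted_bound {Ω H X : Type*} [MeasurableSpace Ω] [MeasurableSpace H]
    (K : ℕ)
    (μ : Measure Ω) [IsProbabilityMeasure μ] (ρ : Measure H) [IsProbabilityMeasure ρ]
    (h : H → X → Fin K) (ptX : Ω → X) (ptY : Ω → Fin K) (hMV : X → Fin K)
    (η ε : ℝ) (hη : 0 ≤ η) (hε : 0 ≤ ε)
    (W : Ω → ℝ) (hWdef : ∀ ω, W ω = (ρ {c | h c (ptX ω) ≠ ptY ω}).toReal)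
    (hjm : MeasurableSet {q : H × Ω | h q.1 (ptX q.2) ≠ ptY q.2})
    (hjm' : MeasurableSet {q : (H × H) × Ω | h q.1.1 (ptX q.2) ≠ h q.1.2 (ptX q.2)})
    -- η-polarized
    (hpol : (μ {ω | W ω > 1 / 2}).toReal ≤ η * ∫ ω, (W ω) ^ 2 ∂μ)
    -- tie-free, so the majority-vote error is bounded by P(W > 1/2)
    (htiefree : (μ {ω | hMV (ptX ω) ≠ ptY ω}).toReal ≤ (μ {ω | W ω > 1 / 2}).toReal)
    -- entropy restriction with parameter ε
    (hentropy : (1 / 2) * ∫ ω, ((ρ.prod ρ) {c : H × H | h c.1 (ptX ω) ≠ ptY ω ∧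
          h c.2 (ptX ω) ≠ ptY ω ∧ h c.1 (ptX ω) ≠ h c.2 (ptX ω)}).toReal ∂μ ≤
        ε * ∫ ω, (ρ {c | h c (ptX ω) ≠ ptY ω}).toReal ∂μ) :
    (μ {ω | hMV (ptX ω) ≠ ptY ω}).toReal ≤
      η * ((1 + ε) * (∫ c, (μ {ω | h c (ptX ω) ≠ ptY ω}).toReal ∂ρ) -
        (1 / 2) * ∫ p, (μ {ω | h p.1 (ptX ω) ≠ h p.2 (ptX ω)}).toReal ∂(ρ.prod ρ)) := by
  classical
  -- joint measurable sets
  set A : Set (H × Ω) := {q | h q.1 (ptX q.2) ≠ ptY q.2} with hA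
  set SD : Set ((H × H) × Ω) := {q | h q.1.1 (ptX q.2) ≠ h q.1.2 (ptX q.2)} with hSD
  have hS1 : MeasurableSet {q : (H × H) × Ω | h q.1.1 (ptX q.2) ≠ ptY q.2} :=
    hjm.preimage ((measurable_fst.comp measurable_fst).prodMk measurable_snd)
  have hS2 : MeasurableSet {q : (H × H) × Ω | h q.1.2 (ptX q.2) ≠ ptY q.2} :=
    hjm.preimage ((measurable_snd.comp measurable_fst).prodMk measurable_snd)
  have hSB : MeasurableSet {q : (H × H) × Ω | h q.1.1 (ptX q.2) ≠ ptY q.2 ∧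
      h q.1.2 (ptX q.2) ≠ ptY q.2 ∧ h q.1.1 (ptX q.2) ≠ h q.1.2 (ptX q.2)} :=
    hS1.inter (hS2.inter hjm')
  -- the three real-valued functions of ω
  set fa : Ω → ℝ := fun ω => (ρ {c | h c (ptX ω) ≠ ptY ω}).toReal with hfa
  set fD : Ω → ℝ := fun ω =>
    ((ρ.prod ρ) {c : H × H | h c.1 (ptX ω) ≠ h c.2 (ptX ω)}).toReal with hfD
  set fB : Ω → ℝ := fun ω => ((ρ.prod ρ) {c : H × H | h c.1 (ptX ω) ≠ ptY ω ∧
      h c.2 (ptX ω) ≠ ptY ω ∧ h c.1 (ptX ω) ≠ h c.2 (ptX ω)}).toReal with hfB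
  have hma : Measurable fa := (measurable_measure_prodMk_right hjm).ennreal_toReal
  have hmD : Measurable fD := (measurable_measure_prodMk_right hjm').ennreal_toReal
  have hmB : Measurable fB := (measurable_measure_prodMk_right hSB).ennreal_toReal
  have hia : Integrable fa μ := intb_aux μ hma (fun _ => ENNReal.toReal_nonneg)
    (fun ω => toReal_le_one_aux ρ _)
  have hiD : Integrable fD μ := intb_aux μ hmD (fun _ => ENNReal.toReal_nonneg)
    (fun ω => toReal_le_one_aux (ρ.prod ρ) _)
  have hiB : Integrable fB μ := intb_aux μ hmB (fun _ => ENNReal.toReal_nonneg)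
    (fun ω => toReal_le_one_aux (ρ.prod ρ) _)
  -- pointwise identity : fa ω ^ 2 = fa ω - fD ω / 2 + fB ω / 2
  have hpt : ∀ ω, fa ω ^ 2 = fa ω - fD ω / 2 + fB ω / 2 := by
    intro ω
    set A' : Set H := {c | h c (ptX ω) ≠ ptY ω} with hA'
    have hA'm : MeasurableSet A' := hjm.preimage measurable_prodMk_right
    set Ds : Set (H × H) := {c | h c.1 (ptX ω) ≠ h c.2 (ptX ω)} with hDs
    have hDsm : MeasurableSet Ds := hjm'.preimage measurable_prodMk_right
    set Bs : Set (H × H) := (A' ×ˢ A') ∩ Ds with hBs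
    have hsetB : {c : H × H | h c.1 (ptX ω) ≠ ptY ω ∧
        h c.2 (ptX ω) ≠ ptY ω ∧ h c.1 (ptX ω) ≠ h c.2 (ptX ω)} = Bs := by
      ext c
      simp only [hBs, Set.mem_inter_iff, Set.mem_prod, Set.mem_setOf_eq, hA', hDs]
      tauto
    -- decomposition of Ds
    have hdecomp : Ds = ((A' ×ˢ A'ᶜ) ∪ (A'ᶜ ×ˢ A')) ∪ Bs := by
      ext c
      simp only [hBs, Set.mem_union, Set.mem_inter_iff, Set.mem_prod, Set.mem_setOf_eq,
        Set.mem_compl_iff, hA', hDs]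
      constructor
      · intro hd
        by_cases h1 : h c.1 (ptX ω) = ptY ω <;> by_cases h2 : h c.2 (ptX ω) = ptY ω
        · exact absurd (h1.trans h2.symm) hd
        · exact Or.inl (Or.inr ⟨by simp [h1], by simpa using h2⟩)
        · exact Or.inl (Or.inl ⟨by simpa using h1, by simp [h2]⟩)
        · exact Or.inr ⟨⟨by simpa using h1, by simpa using h2⟩, hd⟩
      · rintro ((⟨h1, h2⟩ | ⟨h1, h2⟩) | ⟨_, hd⟩)
        · intro hc; exact h1 (hc.trans (not_not.mp h2))
        · intro hc; exact h2 (hc.symm.trans (not_not.mp h1))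
        · exact hd
    have hd1 : Disjoint (A' ×ˢ A'ᶜ) (A'ᶜ ×ˢ A') := by
      rw [Set.disjoint_left]; rintro ⟨c1, c2⟩ ⟨m1, _⟩ ⟨n1, _⟩; exact n1 m1
    have hd2 : Disjoint ((A' ×ˢ A'ᶜ) ∪ (A'ᶜ ×ˢ A')) Bs := by
      rw [Set.disjoint_left]
      rintro ⟨c1, c2⟩ (⟨m1, m2⟩ | ⟨m1, m2⟩) ⟨⟨n1, n2⟩, _⟩
      · exact m2 n2
      · exact m1 n1
    have hmeas : (ρ.prod ρ) Ds = ρ A' * ρ A'ᶜ + ρ A'ᶜ * ρ A' + (ρ.prod ρ) Bs := by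
      rw [hdecomp, measure_union hd2 ((hA'm.prod hA'm).inter hDsm),
        measure_union hd1 (hA'm.compl.prod hA'm),
        Measure.prod_prod, Measure.prod_prod]
    -- pass to real numbers
    have ha1 : ρ A' ≤ 1 := prob_le_one
    have hcompl : (ρ A'ᶜ).toReal = 1 - (ρ A').toReal := by
      rw [measure_compl hA'm (measure_ne_top _ _), measure_univ,
        ENNReal.toReal_sub_of_le ha1 (by simp)]
      simp
    have hD' : fD ω = (ρ A').toReal * (1 - (ρ A').toReal)
        + (1 - (ρ A').toReal) * (ρ A').toReal + fB ω := by
      have : fD ω = ((ρ.prod ρ) Ds).toReal := rfl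
      rw [this, hmeas, ENNReal.toReal_add (by finiteness) (by finiteness),
        ENNReal.toReal_add (by finiteness) (by finiteness),
        ENNReal.toReal_mul, ENNReal.toReal_mul, hcompl]
      simp only [hfB, hsetB]
    have hfaω : fa ω = (ρ A').toReal := rfl
    rw [hfaω, hD']
    ring
  -- integral identity
  have hWfa : ∀ ω, W ω ^ 2 = fa ω ^ 2 := fun ω => by rw [hWdef ω]
  have hint : ∫ ω, W ω ^ 2 ∂μ
      = ∫ ω, fa ω ∂μ - (1 / 2) * ∫ ω, fD ω ∂μ + (1 / 2) * ∫ ω, fB ω ∂μ := by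
    have h0 : ∫ ω, W ω ^ 2 ∂μ = ∫ ω, (fa ω - fD ω / 2 + fB ω / 2) ∂μ := by
      refine integral_congr_ae (Filter.Eventually.of_forall fun ω => ?_)
      show W ω ^ 2 = fa ω - fD ω / 2 + fB ω / 2
      rw [hWfa ω, hpt ω]
    have e1 : ∫ ω, (fa ω - fD ω / 2 + fB ω / 2) ∂μ
        = (∫ ω, (fa ω - fD ω / 2) ∂μ) + ∫ ω, fB ω / 2 ∂μ :=
      integral_add (hia.sub (hiD.div_const 2)) (hiB.div_const 2)
    have e2 : ∫ ω, (fa ω - fD ω / 2) ∂μ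
        = (∫ ω, fa ω ∂μ) - ∫ ω, fD ω / 2 ∂μ := integral_sub hia (hiD.div_const 2)
    have e3 : ∫ ω, fD ω / 2 ∂μ = (∫ ω, fD ω ∂μ) / 2 := integral_div 2 fD
    have e4 : ∫ ω, fB ω / 2 ∂μ = (∫ ω, fB ω ∂μ) / 2 := integral_div 2 fB
    rw [h0, e1, e2, e3, e4]
    ring
  -- entropy bound
  have hent' : (1 / 2) * ∫ ω, fB ω ∂μ ≤ ε * ∫ ω, fa ω ∂μ := hentropy
  have hW2 : ∫ ω, W ω ^ 2 ∂μ
      ≤ (1 + ε) * ∫ ω, fa ω ∂μ - (1 / 2) * ∫ ω, fD ω ∂μ := by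
    rw [hint]; linarith
  -- Fubini
  have hfub1 : ∫ ω, fa ω ∂μ = ∫ c, (μ {ω | h c (ptX ω) ≠ ptY ω}).toReal ∂ρ :=
    fub_aux ρ μ hjm
  have hfub2 : ∫ ω, fD ω ∂μ
      = ∫ p, (μ {ω | h p.1 (ptX ω) ≠ h p.2 (ptX ω)}).toReal ∂(ρ.prod ρ) :=
    fub_aux (ρ.prod ρ) μ hjm'
  calc (μ {ω | hMV (ptX ω) ≠ ptY ω}).toReal
      ≤ (μ {ω | W ω > 1 / 2}).toReal := htiefree
    _ ≤ η * ∫ ω, W ω ^ 2 ∂μ := hpol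
    _ ≤ η * ((1 + ε) * ∫ ω, fa ω ∂μ - (1 / 2) * ∫ ω, fD ω ∂μ) :=
        mul_le_mul_of_nonneg_left hW2 hη
    _ = _ := by rw [hfub1, hfub2]
end

section
/- Suppose for each data point x with true label y, exactly a (1−ε) fraction (by ρ-weight) of classifiers predict y and an ε fraction predict a single common wrong label. Then L(h_ρ^MV) = 0 (for ε < 1/2), E_ρ[L(h)] = ε, and E_{ρ²}[D(h,h')] = 2ε(1−ε), so the bound (4(K−1)/K)(E_ρ[L(h)] − (1/2)E_{ρ²}[D(h,h')]) equals (4(K−1)/K)·ε². -/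
open MeasureTheory

theorem tight_example_bound {Ω H X : Type*} [MeasurableSpace Ω] [MeasurableSpace H]
    (K : ℕ)
    (μ : Measure Ω) [IsProbabilityMeasure μ] (ρ : Measure H) [IsProbabilityMeasure ρ]
    (h : H → X → Fin K) (ptX : Ω → X) (ptY : Ω → Fin K) (hMV : X → Fin K)
    (ε : ℝ) (hε0 : 0 ≤ ε) (hε : ε < 1 / 2)
    (hjm : MeasurableSet {q : H × Ω | h q.1 (ptX q.2) ≠ ptY q.2})
    (hjm' : MeasurableSet {q : (H × H) × Ω | h q.1.1 (ptX q.2) ≠ h q.1.2 (ptX q.2)})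
    -- at every data point, exactly a (1-ε) fraction of classifiers predicts the true label
    (hcorrect : ∀ ω, (ρ {c | h c (ptX ω) = ptY ω}).toReal = 1 - ε)
    -- and the remaining ε fraction all predict a single common wrong label
    (wrong : Ω → Fin K) (hwrong : ∀ ω, wrong ω ≠ ptY ω)
    (hwrongfrac : ∀ ω, (ρ {c | h c (ptX ω) = wrong ω}).toReal = ε)
    -- hMV is the majority vote of the ensemble ρ
    (hargmax : ∀ x : X, ∀ k : Fin K, ρ {c | h c x = k} ≤ ρ {c | h c x = hMV x}) :
    (μ {ω | hMV (ptX ω) ≠ ptY ω}).toReal = 0 ∧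
      (∫ c, (μ {ω | h c (ptX ω) ≠ ptY ω}).toReal ∂ρ) = ε ∧
      (∫ p, (μ {ω | h p.1 (ptX ω) ≠ h p.2 (ptX ω)}).toReal ∂(ρ.prod ρ)) = 2 * ε * (1 - ε) ∧
      4 * ((K : ℝ) - 1) / K *
          ((∫ c, (μ {ω | h c (ptX ω) ≠ ptY ω}).toReal ∂ρ) -
            (1 / 2) * ∫ p, (μ {ω | h p.1 (ptX ω) ≠ h p.2 (ptX ω)}).toReal ∂(ρ.prod ρ)) =
        4 * ((K : ℝ) - 1) / K * ε ^ 2 := by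
  set S : Set (H × Ω) := {q : H × Ω | h q.1 (ptX q.2) ≠ ptY q.2} with hS
  set S' : Set ((H × H) × Ω) := {q | h q.1.1 (ptX q.2) ≠ h q.1.2 (ptX q.2)} with hS'
  have hAmeas : ∀ ω, MeasurableSet {c | h c (ptX ω) = ptY ω} := by
    intro ω
    have he : {c | h c (ptX ω) = ptY ω} = ((fun c => (c, ω)) ⁻¹' S)ᶜ := by
      ext c; simp [hS]
    rw [he]
    exact (hjm.preimage (measurable_prodMk_right)).compl
  have hρA : ∀ ω, ρ {c | h c (ptX ω) = ptY ω} = ENNReal.ofReal (1 - ε) := by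
    intro ω
    rw [← hcorrect ω, ENNReal.ofReal_toReal (measure_ne_top ρ _)]
  have hρAc : ∀ ω, ρ {c | h c (ptX ω) = ptY ω}ᶜ = ENNReal.ofReal ε := by
    intro ω
    rw [measure_compl (hAmeas ω) (measure_ne_top ρ _), hρA, measure_univ,
      ← ENNReal.ofReal_one, ← ENNReal.ofReal_sub _ (by linarith : (0:ℝ) ≤ 1 - ε)]
    norm_num
  have hMVeq : ∀ ω, hMV (ptX ω) = ptY ω := by
    intro ω
    by_contra hne
    have hsub : {c | h c (ptX ω) = hMV (ptX ω)} ⊆ {c | h c (ptX ω) = ptY ω}ᶜ := by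
      intro c hc
      simp only [Set.mem_compl_iff, Set.mem_setOf_eq] at *
      rw [hc]; exact hne
    have h1 := (hargmax (ptX ω) (ptY ω)).trans (measure_mono hsub)
    rw [hρA ω, hρAc ω, ENNReal.ofReal_le_ofReal_iff hε0] at h1
    · linarith
  have part1 : (μ {ω | hMV (ptX ω) ≠ ptY ω}).toReal = 0 := by
    have he : {ω | hMV (ptX ω) ≠ ptY ω} = ∅ := by
      ext ω; simp [hMVeq ω]
    simp [he]
  -- Part 2
  have hprodS : (ρ.prod μ) S = ENNReal.ofReal ε := by
    rw [Measure.prod_apply_symm hjm]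
    have he : ∀ ω, ρ ((fun c => (c, ω)) ⁻¹' S) = ENNReal.ofReal ε := by
      intro ω
      have : (fun c => (c, ω)) ⁻¹' S = {c | h c (ptX ω) = ptY ω}ᶜ := by
        ext c; simp [hS]
      rw [this, hρAc]
    simp only [he, lintegral_const, measure_univ, mul_one]
  have part2 : (∫ c, (μ {ω | h c (ptX ω) ≠ ptY ω}).toReal ∂ρ) = ε := by
    have hmeasf : Measurable fun c => μ (Prod.mk c ⁻¹' S) :=
      measurable_measure_prodMk_left hjm
    have he : (fun c => (μ {ω | h c (ptX ω) ≠ ptY ω}).toReal)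
        = fun c => (μ (Prod.mk c ⁻¹' S)).toReal := rfl
    rw [he, integral_toReal hmeasf.aemeasurable (ae_of_all _ fun c => measure_lt_top μ _),
      ← Measure.prod_apply hjm, hprodS, ENNReal.toReal_ofReal hε0]
  -- Part 3
  have hD : ∀ ω, (ρ.prod ρ) {p : H × H | h p.1 (ptX ω) ≠ h p.2 (ptX ω)}
      = ENNReal.ofReal (2 * ε * (1 - ε)) := by
    intro ω
    set A := {c | h c (ptX ω) = ptY ω} with hA
    set D := {p : H × H | h p.1 (ptX ω) ≠ h p.2 (ptX ω)} with hDdef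
    have hDm : MeasurableSet D := by
      have : D = (fun p => (p, ω)) ⁻¹' S' := rfl
      rw [this]
      exact hjm'.preimage measurable_prodMk_right
    set E := (A ×ˢ Aᶜ) ∪ (Aᶜ ×ˢ A) with hE
    have hEsub : E ⊆ D := by
      rintro ⟨c, c'⟩ (⟨h1, h2⟩ | ⟨h1, h2⟩) <;>
        simp only [Set.mem_compl_iff, Set.mem_setOf_eq, hA, hDdef] at h1 h2 ⊢
      · exact fun heq => h2 (heq.symm.trans h1)
      · exact fun heq => h1 (heq.trans h2)
    have hEmeas : MeasurableSet E :=
      (((hAmeas ω).prod (hAmeas ω).compl)).union ((hAmeas ω).compl.prod (hAmeas ω))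
    have hnull : (ρ.prod ρ) (D \ E) = 0 := by
      have hsub2 : D \ E ⊆ D ∩ (Aᶜ ×ˢ Aᶜ) := by
        rintro ⟨c, c'⟩ ⟨hd, hne⟩
        refine ⟨hd, ?_, ?_⟩ <;> intro hmem
        · exact hne (Or.inl ⟨hmem, fun hc' => hd (by
            simp only [hA, Set.mem_setOf_eq] at hmem hc'
            simp only [hDdef, Set.mem_setOf_eq, not_not] at *
            rw [hmem, hc'])⟩)
        · exact hne (Or.inr ⟨fun hc => hd (by
            simp only [hA, Set.mem_setOf_eq] at hmem hc
            simp only [hDdef, Set.mem_setOf_eq, not_not] at *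
            rw [hmem, hc]), hmem⟩)
      rcases eq_or_lt_of_le hε0 with hz | hpos
      · have hAc0 : ρ Aᶜ = 0 := by rw [hρAc ω, ← hz]; simp
        have : (ρ.prod ρ) (Aᶜ ×ˢ Aᶜ) = 0 := by
          rw [Measure.prod_prod, hAc0, zero_mul]
        exact measure_mono_null (hsub2.trans (Set.inter_subset_right)) this
      · set B := {c | h c (ptX ω) = wrong ω} with hB
        have hρB : ρ B = ENNReal.ofReal ε := by
          rw [← hwrongfrac ω, ENNReal.ofReal_toReal (measure_ne_top ρ _)]
        have hBne : B.Nonempty :=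
          nonempty_of_measure_ne_zero (μ := ρ)
            (by rw [hρB, Ne, ENNReal.ofReal_eq_zero]; intro hle; linarith)
        obtain ⟨c₀, hc₀⟩ := hBne
        have hBmeas : MeasurableSet B := by
          have heq : B = (Prod.mk c₀ ⁻¹' D)ᶜ := by
            ext c'
            simp only [hB, Set.mem_setOf_eq, Set.mem_compl_iff, Set.mem_preimage, hDdef,
              not_not]
            simp only [hB, Set.mem_setOf_eq] at hc₀
            rw [hc₀]
            exact ⟨fun hh => hh.symm, fun hh => hh.symm⟩
          rw [heq]
          exact ((hDm.preimage (measurable_prodMk_left))).compl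
        have hABdisj : Disjoint A B := by
          rw [Set.disjoint_left]
          intro c hca hcb
          simp only [hA, Set.mem_setOf_eq] at hca
          simp only [hB, Set.mem_setOf_eq] at hcb
          exact hwrong ω (hcb ▸ hca ▸ rfl : wrong ω = ptY ω)
        have hABfull : ρ (A ∪ B) = 1 := by
          rw [measure_union hABdisj hBmeas, hρA, hρB,
            ← ENNReal.ofReal_add (by linarith) hε0]
          norm_num
        have hCnull : ρ (A ∪ B)ᶜ = 0 := by
          rw [measure_compl ((hAmeas ω).union hBmeas) (measure_ne_top ρ _), hABfull,
            measure_univ, tsub_self]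
        have hsub3 : D ∩ (Aᶜ ×ˢ Aᶜ) ⊆ ((A ∪ B)ᶜ ×ˢ Set.univ) ∪ (Set.univ ×ˢ (A ∪ B)ᶜ) := by
          rintro ⟨c, c'⟩ ⟨hd, hca, hcb⟩
          by_cases hc : c ∈ A ∪ B
          · right
            refine ⟨trivial, ?_⟩
            rcases hc with hc | hc
            · exact absurd hc hca
            intro hc'
            rcases hc' with hc' | hc'
            · exact hcb hc'
            · simp only [hB, Set.mem_setOf_eq] at hc hc'
              simp only [hDdef, Set.mem_setOf_eq] at hd
              exact hd (hc.trans hc'.symm)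
          · exact Or.inl ⟨hc, trivial⟩
        have hN : (ρ.prod ρ) (((A ∪ B)ᶜ ×ˢ Set.univ) ∪ (Set.univ ×ˢ (A ∪ B)ᶜ)) = 0 := by
          apply measure_union_null <;> rw [Measure.prod_prod, hCnull] <;> simp
        exact measure_mono_null (hsub2.trans hsub3) hN
    have hDE : (ρ.prod ρ) D = (ρ.prod ρ) E := by
      apply le_antisymm
      · calc (ρ.prod ρ) D ≤ (ρ.prod ρ) (E ∪ (D \ E)) :=
              measure_mono (fun p hp => by
                by_cases he : p ∈ E
                · exact Or.inl he
                · exact Or.inr ⟨hp, he⟩)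
          _ ≤ (ρ.prod ρ) E + (ρ.prod ρ) (D \ E) := measure_union_le _ _
          _ = (ρ.prod ρ) E := by rw [hnull, add_zero]
      · exact measure_mono hEsub
    have hdisjE : Disjoint (A ×ˢ Aᶜ) (Aᶜ ×ˢ A) := by
      rw [Set.disjoint_left]
      rintro ⟨c, c'⟩ ⟨h1, _⟩ ⟨h2, _⟩
      exact h2 h1
    rw [hDE, hE, measure_union hdisjE ((hAmeas ω).compl.prod (hAmeas ω)),
      Measure.prod_prod, Measure.prod_prod, hρA, hρAc,
      ← ENNReal.ofReal_mul (by linarith), ← ENNReal.ofReal_mul hε0,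
      ← ENNReal.ofReal_add (by nlinarith) (by nlinarith)]
    congr 1
    ring
  have hprodS' : ((ρ.prod ρ).prod μ) S' = ENNReal.ofReal (2 * ε * (1 - ε)) := by
    rw [Measure.prod_apply_symm hjm']
    have he : ∀ ω, (ρ.prod ρ) ((fun p => (p, ω)) ⁻¹' S')
        = ENNReal.ofReal (2 * ε * (1 - ε)) := by
      intro ω
      have : (fun p => (p, ω)) ⁻¹' S' = {p : H × H | h p.1 (ptX ω) ≠ h p.2 (ptX ω)} := rfl
      rw [this, hD]
    simp only [he, lintegral_const, measure_univ, mul_one]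
  have part3 : (∫ p, (μ {ω | h p.1 (ptX ω) ≠ h p.2 (ptX ω)}).toReal ∂(ρ.prod ρ))
      = 2 * ε * (1 - ε) := by
    have hmeasf : Measurable fun p : H × H => μ (Prod.mk p ⁻¹' S') :=
      measurable_measure_prodMk_left hjm'
    have he : (fun p : H × H => (μ {ω | h p.1 (ptX ω) ≠ h p.2 (ptX ω)}).toReal)
        = fun p => (μ (Prod.mk p ⁻¹' S')).toReal := rfl
    rw [he, integral_toReal hmeasf.aemeasurable (ae_of_all _ fun p => measure_lt_top μ _),
      ← Measure.prod_apply hjm', hprodS', ENNReal.toReal_ofReal (by nlinarith)]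
  refine ⟨part1, part2, part3, ?_⟩
  rw [part2, part3]
  ring
end
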